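/- arXiv:0911.4697 — 7 statements merged into one kernel-verified Lean document; each statement's English description precedes it below -/
import Mathlib

section
/- A face σ of a simplicial complex Δ is a shedding face if and only if no facet of (star_Δ σ) \ σ is a facet of Δ \ σ. -/
variable {ι : Type*} [DecidableEq ι]

/-- A clutter: an antichain of finite sets (no circuit properly contains another). -/
def IsClutter (C : Set (Finset ι)) : Prop :=
  ∀ e₁ ∈ C, ∀ e₂ ∈ C, e₁ ⊆ e₂ → e₁ = e₂

/-- The independence complex of the clutter with circuit set `C` on ground set `V`:
faces are the subsets of `V` containing no circuit. -/
def indepOn (V : Finset ι) (C : Set (Finset ι)) : Set (Finset ι) :=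
  {σ | σ ⊆ V ∧ ∀ e ∈ C, ¬ e ⊆ σ}

/-- The minimal members of a family of finite sets. -/
def minimalSets (S : Set (Finset ι)) : Set (Finset ι) :=
  {e | e ∈ S ∧ ∀ f ∈ S, f ⊆ e → f = e}

/-- Deletion of a vertex from a clutter: keep the circuits avoiding `v`. -/
def clDel (C : Set (Finset ι)) (v : ι) : Set (Finset ι) :=
  {e | e ∈ C ∧ v ∉ e}

/-- Contraction of a vertex in a clutter: minimal sets among `{e \ {v}}`. -/
def clCon (C : Set (Finset ι)) (v : ι) : Set (Finset ι) :=
  minimalSets ((fun e => e.erase v) '' C)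

/-- A simplicial complex: a family of finite sets closed under taking subsets. -/
def IsComplex (Δ : Set (Finset ι)) : Prop :=
  ∀ σ ∈ Δ, ∀ τ, τ ⊆ σ → τ ∈ Δ

/-- The link of a face `σ`. -/
def link (Δ : Set (Finset ι)) (σ : Finset ι) : Set (Finset ι) :=
  {τ | Disjoint τ σ ∧ τ ∪ σ ∈ Δ}

/-- The face-deletion `Δ \ σ`: faces of `Δ` not containing `σ`. -/
def delFace (Δ : Set (Finset ι)) (σ : Finset ι) : Set (Finset ι) :=
  {τ | τ ∈ Δ ∧ ¬ σ ⊆ τ}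

/-- The star of a face `σ`, as a subcomplex. -/
def starC (Δ : Set (Finset ι)) (σ : Finset ι) : Set (Finset ι) :=
  {τ | τ ∈ Δ ∧ τ ∪ σ ∈ Δ}

/-- A facet: a maximal face. -/
def IsFacet (Δ : Set (Finset ι)) (σ : Finset ι) : Prop :=
  σ ∈ Δ ∧ ∀ τ ∈ Δ, σ ⊆ τ → σ = τ

/-- A shedding face: every face `τ` of the star of `σ` satisfies the exchange property:
for every `v ∈ σ` there is `w ∉ τ` with `(τ ∪ {w}) \ {v}` a face. -/
def SheddingFace (Δ : Set (Finset ι)) (σ : Finset ι) : Prop :=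
  ∀ τ ∈ Δ, σ ⊆ τ → ∀ v ∈ σ, ∃ w, w ∉ τ ∧ (insert w τ).erase v ∈ Δ

/-- Shellability (Björner–Wachs form): an ordering `f 0, f 1, …` of the facets such
that for all `i < j` there are `k < j` and `x ∈ f j` with
`f i ∩ f j ⊆ f k ∩ f j = f j \ {x}`. -/
def Shellable (Δ : Set (Finset ι)) : Prop :=
  ∃ (m : ℕ) (f : Fin m → Finset ι),
    Function.Injective f ∧
    (∀ σ, IsFacet Δ σ ↔ ∃ i, f i = σ) ∧
    ∀ i j : Fin m, i < j →
      ∃ k, k < j ∧ ∃ x ∈ f j, f i ∩ f j ⊆ f k ∩ f j ∧ f k ∩ f j = (f j).erase x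

/-- `k`-decomposability (for possibly non-pure complexes): a complex is
`k`-decomposable if it is a simplex (or degenerate), or has a shedding face of
dimension at most `k` whose deletion and link are both `k`-decomposable. -/
inductive KDecomposable : ℤ → Set (Finset ι) → Prop
  | of_empty (k : ℤ) : KDecomposable k ∅
  | of_simplex (k : ℤ) (σ : Finset ι) : KDecomposable k {τ | τ ⊆ σ}
  | of_shed (k : ℤ) (Δ : Set (Finset ι)) (σ : Finset ι) (hσ : σ ∈ Δ)
      (hne : σ.Nonempty) (hdim : (σ.card : ℤ) ≤ k + 1)
      (hshed : SheddingFace Δ σ)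
      (h₁ : KDecomposable k (delFace Δ σ)) (h₂ : KDecomposable k (link Δ σ)) :
      KDecomposable k Δ

/-- A simplicial vertex of a clutter: any two distinct circuits `e₁, e₂` containing `v`
admit a third circuit `e₃ ⊆ (e₁ ∪ e₂) \ {v}`. -/
def SimplicialVertex (C : Set (Finset ι)) (v : ι) : Prop :=
  ∀ e₁ ∈ C, ∀ e₂ ∈ C, e₁ ≠ e₂ → v ∈ e₁ → v ∈ e₂ →
    ∃ e₃ ∈ C, e₃ ⊆ (e₁ ∪ e₂).erase v

/-- Minors of a clutter (with ground set): obtained by repeated deletions and contractions. -/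
inductive Minor : Finset ι → Set (Finset ι) → Finset ι → Set (Finset ι) → Prop
  | refl (V : Finset ι) (C : Set (Finset ι)) : Minor V C V C
  | del {V C W D} (v : ι) (hv : v ∈ W) (h : Minor V C W D) :
      Minor V C (W.erase v) (clDel D v)
  | con {V C W D} (v : ι) (hv : v ∈ W) (h : Minor V C W D) :
      Minor V C (W.erase v) (clCon D v)

/-- Contractions of a clutter (with ground set): obtained by repeated contractions. -/
inductive ConMinor : Finset ι → Set (Finset ι) → Finset ι → Set (Finset ι) → Prop
  | refl (V : Finset ι) (C : Set (Finset ι)) : ConMinor V C V C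
  | con {V C W D} (v : ι) (hv : v ∈ W) (h : ConMinor V C W D) :
      ConMinor V C (W.erase v) (clCon D v)

/-- A clutter is chordal if every minor with at least one vertex has a simplicial vertex. -/
def Chordal (V : Finset ι) (C : Set (Finset ι)) : Prop :=
  ∀ W D, Minor V C W D → W.Nonempty → ∃ v ∈ W, SimplicialVertex D v

/-- Clutter of minimal non-faces of a complex `Δ` on ground set `V`. -/
def nonfaceClutter (V : Finset ι) (Δ : Set (Finset ι)) : Set (Finset ι) :=
  {e | e ⊆ V ∧ e ∉ Δ ∧ ∀ e', e' ⊂ e → e' ∈ Δ}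

/-- `cNon V C d`: the `d`-non-circuits of `C`, i.e. the `d`-subsets of `V`
that are not circuits of `C`. -/
def cNon (V : Finset ι) (C : Set (Finset ι)) (d : ℕ) : Set (Finset ι) :=
  {e | e ⊆ V ∧ e.card = d ∧ e ∉ C}

/-- Combinatorial Alexander dual of a complex on ground set `V`. -/
def alexDual (V : Finset ι) (Δ : Set (Finset ι)) : Set (Finset ι) :=
  {σ | σ ⊆ V ∧ V \ σ ∉ Δ}

/-- Join of two complexes. -/
def joinC (Δ₁ Δ₂ : Set (Finset ι)) : Set (Finset ι) :=
  {σ | ∃ σ₁ ∈ Δ₁, ∃ σ₂ ∈ Δ₂, σ = σ₁ ∪ σ₂}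

theorem isFacet_iff_maximal {α : Type*} {S : Set (Finset α)} {τ : Finset α} :
    IsFacet S τ ↔ Maximal (· ∈ S) τ :=
  maximal_iff.symm

theorem exists_subset_isFacet {α : Type*} [Finite α] {S : Set (Finset α)} {τ : Finset α}
    (hτ : τ ∈ S) : ∃ τ₀, τ ⊆ τ₀ ∧ IsFacet S τ₀ := by
  simpa only [isFacet_iff_maximal] using Finite.exists_le_maximal (p := (· ∈ S)) hτ

theorem exists_ssuperset_of_not_isFacet {α : Type*} {S : Set (Finset α)} {τ : Finset α}
    (hτ : τ ∈ S) (h : ¬ IsFacet S τ) : ∃ τ' ∈ S, τ ⊂ τ' := by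
  rw [isFacet_iff_maximal, not_maximal_iff_exists_gt hτ] at h
  obtain ⟨τ', hlt, hτ'⟩ := h
  exact ⟨τ', hτ', hlt⟩

section Shedding

variable {Δ : Set (Finset ι)} {σ τ : Finset ι}

/-- Shedding applied to `τ ∪ σ` at a vertex `v ∈ σ \ τ` trades `v` for a new vertex `w`. -/
theorem exists_delFace_ssuperset_of_sheddingFace (hshed : SheddingFace Δ σ)
    (hτσ : τ ∪ σ ∈ Δ) (hστ : ¬ σ ⊆ τ) : ∃ τ' ∈ delFace Δ σ, τ ⊂ τ' := by
  obtain ⟨v, hvσ, hvτ⟩ := Finset.not_subset.mp hστ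
  obtain ⟨w, hw, hwΔ⟩ := hshed (τ ∪ σ) hτσ Finset.subset_union_right v hvσ
  have hwv : w ≠ v := by rintro rfl; exact hw (Finset.mem_union_right _ hvσ)
  have hsub : τ ⊆ (insert w (τ ∪ σ)).erase v := fun x hx =>
    Finset.mem_erase.mpr ⟨fun hxv => hvτ (hxv ▸ hx),
      Finset.mem_insert_of_mem (Finset.mem_union_left _ hx)⟩
  have hwmem : w ∈ (insert w (τ ∪ σ)).erase v :=
    Finset.mem_erase.mpr ⟨hwv, Finset.mem_insert_self _ _⟩
  exact ⟨_, ⟨hwΔ, fun h => Finset.notMem_erase v _ (h hvσ)⟩,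
    (Finset.ssubset_iff_of_subset hsub).mpr
      ⟨w, hwmem, fun hwτ => hw (Finset.mem_union_left _ hwτ)⟩⟩

theorem erase_mem_delFace_starC (hΔ : IsComplex Δ) (hτ : τ ∈ Δ) (hστ : σ ⊆ τ) {v : ι}
    (hv : v ∈ σ) : τ.erase v ∈ delFace (starC Δ σ) σ := by
  have hunion : τ.erase v ∪ σ = τ := by
    rw [Finset.erase_union_of_mem hv, Finset.union_eq_left.mpr hστ]
  exact ⟨⟨hΔ τ hτ _ (Finset.erase_subset v τ), by rwa [hunion]⟩,
    fun h => Finset.notMem_erase v τ (h hv)⟩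

theorem exists_exchange_of_ssubset_delFace (hΔ : IsComplex Δ) (hστ : σ ⊆ τ) {v : ι}
    (hv : v ∈ σ) {τ₀ τ' : Finset ι} (hτ₀ : τ.erase v ⊆ τ₀) (hlt : τ₀ ⊂ τ')
    (hτ' : τ' ∈ delFace Δ σ) : ∃ w, w ∉ τ ∧ (insert w τ).erase v ∈ Δ := by
  obtain ⟨w, hwτ', hwτ₀⟩ := Finset.exists_of_ssubset hlt
  have hwv : w ≠ v := by
    rintro rfl
    refine hτ'.2 fun x hx => ?_
    by_cases hxw : x = w
    · exact hxw ▸ hwτ'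
    · exact hlt.subset (hτ₀ (Finset.mem_erase.mpr ⟨hxw, hστ hx⟩))
  have hwτ : w ∉ τ := fun hwτ => hwτ₀ (hτ₀ (Finset.mem_erase.mpr ⟨hwv, hwτ⟩))
  refine ⟨w, hwτ, hΔ τ' hτ'.1 _ fun x hx => ?_⟩
  obtain ⟨hxv, hx⟩ := Finset.mem_erase.mp hx
  rcases Finset.mem_insert.mp hx with rfl | hxτ
  · exact hwτ'
  · exact hlt.subset (hτ₀ (Finset.mem_erase.mpr ⟨hxv, hxτ⟩))

end Shedding

theorem stmt4_general [Fintype ι] (Δ : Set (Finset ι)) (hΔ : IsComplex Δ)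
    (σ : Finset ι) :
    SheddingFace Δ σ ↔
      ∀ τ, IsFacet (delFace (starC Δ σ) σ) τ → ¬ IsFacet (delFace Δ σ) τ := by
  constructor
  · intro hshed τ hτ hfac
    obtain ⟨τ', hτ', hlt⟩ := exists_delFace_ssuperset_of_sheddingFace hshed hτ.1.1.2 hτ.1.2
    exact hlt.ne (hfac.2 τ' hτ' hlt.subset)
  · -- Extend `τ \ {v}` to a facet of `(star σ) \ σ`; any vertex by which that facet
    -- grows inside `Δ \ σ` can replace `v`.
    intro h τ hτ hστ v hv
    obtain ⟨τ₀, hsub, hfac⟩ :=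
      exists_subset_isFacet (erase_mem_delFace_starC hΔ hτ hστ hv)
    have hτ₀ : τ₀ ∈ delFace Δ σ := ⟨hfac.1.1.1, hfac.1.2⟩
    obtain ⟨τ', hτ', hlt⟩ := exists_ssuperset_of_not_isFacet hτ₀ (h τ₀ hfac)
    exact exists_exchange_of_ssubset_delFace hΔ hστ hv hsub hlt hτ'

/-- `σ` is a shedding face iff no facet of `(star_Δ σ) \ σ`
is a facet of `Δ \ σ`. -/
theorem stmt4 [Fintype ι] (Δ : Set (Finset ι)) (hΔ : IsComplex Δ)
    (σ : Finset ι) (hσ : σ ∈ Δ) :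
    SheddingFace Δ σ ↔
      ∀ τ, IsFacet (delFace (starC Δ σ) σ) τ → ¬ IsFacet (delFace Δ σ) τ :=
  stmt4_general Δ hΔ σ
end

section
/- If σ is a shedding face of a simplicial complex Δ such that both Δ\σ and link_Δ σ are shellable, then Δ is shellable. -/
variable {ι : Type*} [DecidableEq ι]

/-!
Put a shelling of `Δ \ σ` first and then the facets `L ∪ σ`, `L` running through a shelling
of `link_Δ σ`. The exchange property of a shedding face makes every facet of `Δ \ σ` a facet
of `Δ`, so this lists exactly the facets of `Δ`. Inside each block the shelling conditions
carry over, because adjoining `σ` to sets disjoint from it preserves their intersections. For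
a facet `F` of `Δ \ σ` followed by `G = L ∪ σ`, pick `v ∈ σ \ F`: then `G \ {v}` is a face of
`Δ \ σ`, so it lies in some facet `F'` of `Δ \ σ`, and `F ∩ G ⊆ F' ∩ G = G \ {v}`.
-/

def IsShellingOrder {m : ℕ} (f : Fin m → Finset ι) : Prop :=
  ∀ i j : Fin m, i < j →
    ∃ k, k < j ∧ ∃ x ∈ f j, f i ∩ f j ⊆ f k ∩ f j ∧ f k ∩ f j = (f j).erase x

namespace IsShellingOrder

variable {m n : ℕ} {f : Fin m → Finset ι} {g : Fin n → Finset ι}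

theorem union_right (hf : IsShellingOrder f) {σ : Finset ι} (hdisj : ∀ j, Disjoint (f j) σ) :
    IsShellingOrder fun j => f j ∪ σ := by
  intro i j hij
  obtain ⟨k, hkj, x, hx, hsub, heq⟩ := hf i j hij
  have hxσ : x ∉ σ := Finset.disjoint_left.1 (hdisj j) hx
  refine ⟨k, hkj, x, Finset.mem_union_left σ hx, ?_⟩
  simp only [← Finset.inter_union_distrib_right, Finset.erase_union_distrib,
    Finset.erase_eq_of_notMem hxσ, heq, and_true]
  exact Finset.union_subset_union_left (heq ▸ hsub)

theorem append (hf : IsShellingOrder f) (hg : IsShellingOrder g)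
    (hfg : ∀ i j, ∃ k, ∃ x ∈ g j, f i ∩ g j ⊆ f k ∩ g j ∧ f k ∩ g j = (g j).erase x) :
    IsShellingOrder (Fin.append f g) := by
  intro i j hij
  induction j using Fin.addCases with
  | left j =>
    induction i using Fin.addCases with
    | left i =>
      obtain ⟨k, hkj, hk⟩ := hf i j (by simpa only [Fin.lt_def, Fin.val_castAdd] using hij)
      refine ⟨Fin.castAdd n k, by simpa only [Fin.lt_def, Fin.val_castAdd] using hkj, ?_⟩
      simpa only [Fin.append_left] using hk
    | right i =>
      simp only [Fin.lt_def, Fin.val_castAdd, Fin.val_natAdd] at hij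
      omega
  | right j =>
    induction i using Fin.addCases with
    | left i =>
      obtain ⟨k, hk⟩ := hfg i j
      refine ⟨Fin.castAdd n k, ?_, ?_⟩
      · simp only [Fin.lt_def, Fin.val_castAdd, Fin.val_natAdd]
        omega
      · simpa only [Fin.append_left, Fin.append_right] using hk
    | right i =>
      obtain ⟨k, hkj, hk⟩ := hg i j ((Fin.natAdd_lt_natAdd_iff m).1 hij)
      refine ⟨Fin.natAdd m k, (Fin.natAdd_lt_natAdd_iff m).2 hkj, ?_⟩
      simpa only [Fin.append_right] using hk

end IsShellingOrder

theorem exists_isFacet_superset {α : Type*} [Finite α] {Δ : Set (Finset α)} {τ : Finset α}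
    (hτ : τ ∈ Δ) : ∃ F, IsFacet Δ F ∧ τ ⊆ F := by
  obtain ⟨F, hτF, hF⟩ := Finite.exists_le_maximal (p := (· ∈ Δ)) hτ
  exact ⟨F, ⟨hF.1, fun G hG hFG => subset_antisymm hFG (hF.2 hG hFG)⟩, hτF⟩

theorem IsFacet.of_subset {α : Type*} {Δ Γ : Set (Finset α)} {F : Finset α} (hF : IsFacet Δ F)
    (hΓ : Γ ⊆ Δ) (hFΓ : F ∈ Γ) : IsFacet Γ F :=
  ⟨hFΓ, fun G hG => hF.2 G (hΓ hG)⟩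

variable {Δ : Set (Finset ι)} {σ F G : Finset ι}

theorem IsFacet.union_of_link (hF : IsFacet (link Δ σ) F) : IsFacet Δ (F ∪ σ) := by
  refine ⟨hF.1.2, fun G hG hFσG => ?_⟩
  obtain ⟨hFG, hσG⟩ := Finset.union_subset_iff.1 hFσG
  have hGσ : G \ σ ∈ link Δ σ :=
    ⟨Finset.sdiff_disjoint, by rwa [Finset.sdiff_union_of_subset hσG]⟩
  rw [hF.2 _ hGσ (Finset.subset_sdiff.2 ⟨hFG, hF.1.1⟩), Finset.sdiff_union_of_subset hσG]

theorem IsFacet.sdiff_mem_link (hF : IsFacet Δ F) (hσF : σ ⊆ F) : IsFacet (link Δ σ) (F \ σ) := by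
  refine ⟨⟨Finset.sdiff_disjoint, by rw [Finset.sdiff_union_of_subset hσF]; exact hF.1⟩,
    fun G hG hFG => ?_⟩
  have hFG' : F ⊆ G ∪ σ := by
    rw [← Finset.sdiff_union_of_subset hσF]
    exact Finset.union_subset_union_left hFG
  rw [hF.2 _ hG.2 hFG', Finset.union_sdiff_cancel_right hG.1]

theorem IsFacet.subset_insert_of_delFace (hF : IsFacet (delFace Δ σ) F) {y : ι} (hy : y ∉ F)
    (hyF : insert y F ∈ Δ) : σ ⊆ insert y F := by
  by_contra h
  exact hy (hF.2 _ ⟨hyF, h⟩ (Finset.subset_insert y F) ▸ Finset.mem_insert_self y F)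

theorem SheddingFace.isFacet_of_isFacet_delFace (hΔ : IsComplex Δ) (hshed : SheddingFace Δ σ)
    (hF : IsFacet (delFace Δ σ) F) : IsFacet Δ F := by
  refine ⟨hF.1.1, fun G hG hFG => ?_⟩
  by_contra hne
  obtain ⟨x, hxG, hxF⟩ := Finset.exists_of_ssubset (hFG.ssubset_of_ne hne)
  have hxFΔ : insert x F ∈ Δ := hΔ G hG _ (Finset.insert_subset hxG hFG)
  have hσx := hF.subset_insert_of_delFace hxF hxFΔ
  have hxσ : x ∈ σ := by
    by_contra hxσ
    exact hF.1.2 (by rwa [Finset.subset_insert_iff, Finset.erase_eq_of_notMem hxσ] at hσx)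
  -- exchanging `x` for the vertex `w` given by the shedding condition enlarges `F` inside `Δ \ σ`
  obtain ⟨w, hw, hwΔ⟩ := hshed _ hxFΔ hσx x hxσ
  rw [Finset.mem_insert, not_or] at hw
  rw [Finset.erase_insert_of_ne hw.1, Finset.erase_insert hxF] at hwΔ
  have hxw := hF.subset_insert_of_delFace hw.2 hwΔ hxσ
  rw [Finset.mem_insert] at hxw
  exact hxw.elim (fun h => hw.1 h.symm) hxF

theorem SheddingFace.isFacet_iff (hΔ : IsComplex Δ) (hshed : SheddingFace Δ σ) {τ : Finset ι} :
    IsFacet Δ τ ↔ IsFacet (delFace Δ σ) τ ∨ ∃ L, IsFacet (link Δ σ) L ∧ L ∪ σ = τ := by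
  constructor
  · intro hτ
    by_cases hστ : σ ⊆ τ
    · exact Or.inr ⟨τ \ σ, hτ.sdiff_mem_link hστ, Finset.sdiff_union_of_subset hστ⟩
    · exact Or.inl (hτ.of_subset (fun _ h => h.1) ⟨hτ.1, hστ⟩)
  · rintro (hτ | ⟨L, hL, rfl⟩)
    · exact hshed.isFacet_of_isFacet_delFace hΔ hτ
    · exact hL.union_of_link

theorem exists_isFacet_delFace_inter_eq_erase [Finite ι] (hΔ : IsComplex Δ) (hG : G ∈ Δ)
    (hσG : σ ⊆ G) {v : ι} (hv : v ∈ σ) :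
    ∃ F, IsFacet (delFace Δ σ) F ∧ F ∩ G = G.erase v := by
  have hvG : G.erase v ∈ delFace Δ σ :=
    ⟨hΔ G hG _ (Finset.erase_subset v G), fun h => by simpa using h hv⟩
  obtain ⟨F, hF, hGF⟩ := exists_isFacet_superset hvG
  have hvF : v ∉ F := fun hvF => hF.1.2 <| hσG.trans <| by
    rw [← Finset.insert_erase (hσG hv)]
    exact Finset.insert_subset hvF hGF
  refine ⟨F, hF, subset_antisymm (fun a ha => ?_)
    (Finset.subset_inter hGF (Finset.erase_subset v G))⟩
  rw [Finset.mem_inter] at ha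
  exact Finset.mem_erase.2 ⟨fun h => hvF (h ▸ ha.1), ha.2⟩

theorem exists_shelling_step_of_delFace [Finite ι] (hΔ : IsComplex Δ) {m : ℕ}
    {f : Fin m → Finset ι} (hf : ∀ F, IsFacet (delFace Δ σ) F ↔ ∃ i, f i = F) (hG : G ∈ Δ)
    (hσG : σ ⊆ G) (i : Fin m) : ∃ k, ∃ x ∈ G, f i ∩ G ⊆ f k ∩ G ∧ f k ∩ G = G.erase x := by
  obtain ⟨v, hvσ, hvf⟩ := Finset.not_subset.1 ((hf (f i)).2 ⟨i, rfl⟩).1.2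
  obtain ⟨F, hF, hFG⟩ := exists_isFacet_delFace_inter_eq_erase hΔ hG hσG hvσ
  obtain ⟨k, rfl⟩ := (hf F).1 hF
  refine ⟨k, v, hσG hvσ, hFG ▸ fun a ha => ?_, hFG⟩
  rw [Finset.mem_inter] at ha
  exact Finset.mem_erase.2 ⟨fun h => hvf (h ▸ ha.1), ha.2⟩

theorem stmt5_general [Fintype ι] (Δ : Set (Finset ι)) (hΔ : IsComplex Δ)
    (σ : Finset ι) (hshed : SheddingFace Δ σ)
    (h₁ : Shellable (delFace Δ σ)) (h₂ : Shellable (link Δ σ)) :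
    Shellable Δ := by
  obtain ⟨m, f, hf_inj, hf_facets, hf_shell : IsShellingOrder f⟩ := h₁
  obtain ⟨n, g, hg_inj, hg_facets, hg_shell : IsShellingOrder g⟩ := h₂
  have hf_del : ∀ i, f i ∈ delFace Δ σ := fun i => ((hf_facets _).2 ⟨i, rfl⟩).1
  have hg_disj : ∀ j, Disjoint (g j) σ := fun j => ((hg_facets _).2 ⟨j, rfl⟩).1.1
  refine ⟨m + n, Fin.append f (fun j => g j ∪ σ), ?_, fun τ => ?_, ?_⟩
  · refine Fin.append_injective_iff.2 ⟨hf_inj, fun j j' h => hg_inj ?_,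
      fun i j h => (hf_del i).2 (h ▸ Finset.subset_union_right)⟩
    rw [← Finset.union_sdiff_cancel_right (hg_disj j),
      ← Finset.union_sdiff_cancel_right (hg_disj j')]
    exact congrArg (· \ σ) h
  · rw [← not_iff_not]
    simp [hshed.isFacet_iff hΔ, hf_facets, hg_facets, Fin.forall_fin_add]
  · exact hf_shell.append (hg_shell.union_right hg_disj) fun i j =>
      exists_shelling_step_of_delFace hΔ hf_facets ((hg_facets _).2 ⟨j, rfl⟩).1.2
        Finset.subset_union_right i

/-- if `σ` is a shedding face and both `Δ\σ` and `link_Δ σ` are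
shellable, then `Δ` is shellable. -/
theorem stmt5 [Fintype ι] (Δ : Set (Finset ι)) (hΔ : IsComplex Δ)
    (σ : Finset ι) (hσ : σ ∈ Δ) (hshed : SheddingFace Δ σ)
    (h₁ : Shellable (delFace Δ σ)) (h₂ : Shellable (link Δ σ)) :
    Shellable Δ :=
  stmt5_general Δ hΔ σ hshed h₁ h₂
end

section
/- If a simplicial complex Δ is k-decomposable, then for every face τ of Δ the link link_Δ τ is k-decomposable. -/
variable {ι : Type*} [DecidableEq ι]

lemma isComplex_delFace {Δ : Set (Finset ι)} (hC : IsComplex Δ) (σ : Finset ι) :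
    IsComplex (delFace Δ σ) := by
  rintro τ ⟨hτ, hns⟩ ρ hρ
  exact ⟨hC τ hτ ρ hρ, fun hs => hns (hs.trans hρ)⟩

lemma isComplex_link {Δ : Set (Finset ι)} (hC : IsComplex Δ) (σ : Finset ι) :
    IsComplex (link Δ σ) := by
  rintro τ ⟨hd, hu⟩ ρ hρ
  exact ⟨Finset.disjoint_of_subset_left hρ hd,
    hC _ hu _ (Finset.union_subset_union_left hρ)⟩

lemma stmt7_aux (k : ℤ) (Δ : Set (Finset ι)) (h : KDecomposable k Δ) :
    IsComplex Δ → ∀ τ ∈ Δ, KDecomposable k (link Δ τ) := by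
  induction h with
  | of_empty => intro _ τ hτ; exact absurd hτ (Set.notMem_empty τ)
  | of_simplex σ =>
      intro _ τ hτ
      have hτσ : τ ⊆ σ := hτ
      have heq : link {ρ : Finset ι | ρ ⊆ σ} τ = {ρ | ρ ⊆ σ \ τ} := by
        ext ρ
        simp only [link, Set.mem_setOf_eq]
        constructor
        · rintro ⟨hd, hsub⟩ x hx
          exact Finset.mem_sdiff.mpr ⟨hsub (Finset.mem_union_left _ hx),
            fun hxτ => Finset.disjoint_left.mp hd hx hxτ⟩
        · intro hsub
          refine ⟨Finset.disjoint_left.mpr fun x hx hxτ =>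
            (Finset.mem_sdiff.mp (hsub hx)).2 hxτ, ?_⟩
          intro x hx
          rcases Finset.mem_union.mp hx with h1 | h2
          · exact (Finset.mem_sdiff.mp (hsub h1)).1
          · exact hτσ h2
      rw [heq]
      exact KDecomposable.of_simplex k (σ \ τ)
  | of_shed Δ σ hσ hne hdim hshed h1 h2 ih1 ih2 =>
      intro hC τ hτ
      have hCdel : IsComplex (delFace Δ σ) := isComplex_delFace hC σ
      have hClink : IsComplex (link Δ σ) := isComplex_link hC σ
      by_cases hστ : σ ⊆ τ
      · -- link Δ τ = link (link Δ σ) (τ \ σ)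
        have hmem : τ \ σ ∈ link Δ σ :=
          ⟨Finset.sdiff_disjoint, by rwa [Finset.sdiff_union_of_subset hστ]⟩
        have heq : link Δ τ = link (link Δ σ) (τ \ σ) := by
          ext ρ
          simp only [link, Set.mem_setOf_eq, Finset.disjoint_union_left]
          rw [Finset.union_assoc, Finset.sdiff_union_of_subset hστ]
          constructor
          · rintro ⟨hd, hu⟩
            refine ⟨Finset.disjoint_of_subset_right Finset.sdiff_subset hd,
              ⟨Finset.disjoint_of_subset_right hστ hd, Finset.sdiff_disjoint⟩, hu⟩
          · rintro ⟨hd1, ⟨hd2, _⟩, hu⟩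
            refine ⟨?_, hu⟩
            rw [Finset.disjoint_left]
            intro x hx hxτ
            by_cases hxσ : x ∈ σ
            · exact Finset.disjoint_left.mp hd2 hx hxσ
            · exact Finset.disjoint_left.mp hd1 hx (Finset.mem_sdiff.mpr ⟨hxτ, hxσ⟩)
        rw [heq]
        exact ih2 hClink _ hmem
      · by_cases hστΔ : τ ∪ σ ∈ Δ
        · -- shedding face σ \ τ of link Δ τ
          set σ' : Finset ι := σ \ τ with hσ'def
          have hσ'ne : σ'.Nonempty := Finset.sdiff_nonempty.mpr hστ
          have hσ'τ : Disjoint σ' τ := Finset.sdiff_disjoint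
          have hσ'mem : σ' ∈ link Δ τ :=
            ⟨hσ'τ, by rw [Finset.sdiff_union_self_eq_union, Finset.union_comm]; exact hστΔ⟩
          have hdim' : (σ'.card : ℤ) ≤ k + 1 :=
            le_trans (by exact_mod_cast Finset.card_le_card Finset.sdiff_subset) hdim
          have hshed' : SheddingFace (link Δ τ) σ' := by
            rintro η ⟨hd, hu⟩ hsub v hv
            have hvσ : v ∈ σ := (Finset.mem_sdiff.mp hv).1
            have hvτ : v ∉ τ := (Finset.mem_sdiff.mp hv).2
            have hσsub : σ ⊆ η ∪ τ := by
              intro x hx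
              by_cases hxτ : x ∈ τ
              · exact Finset.mem_union_right _ hxτ
              · exact Finset.mem_union_left _ (hsub (Finset.mem_sdiff.mpr ⟨hx, hxτ⟩))
            obtain ⟨w, hw, hwf⟩ := hshed (η ∪ τ) hu hσsub v hvσ
            have hwη : w ∉ η := fun h => hw (Finset.mem_union_left _ h)
            have hwτ : w ∉ τ := fun h => hw (Finset.mem_union_right _ h)
            refine ⟨w, hwη, ?_, ?_⟩
            · rw [Finset.disjoint_left]
              intro x hx hxτ
              have hx' := Finset.mem_of_mem_erase hx
              rcases Finset.mem_insert.mp hx' with rfl | hxη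
              · exact hwτ hxτ
              · exact Finset.disjoint_left.mp hd hxη hxτ
            · have hueq : (insert w η).erase v ∪ τ = (insert w (η ∪ τ)).erase v := by
                ext x
                simp only [Finset.mem_union, Finset.mem_erase, Finset.mem_insert]
                constructor
                · rintro (⟨hxv, hx⟩ | hxτ)
                  · exact ⟨hxv, by tauto⟩
                  · exact ⟨fun h => hvτ (h ▸ hxτ), Or.inr (Or.inr hxτ)⟩
                · rintro ⟨hxv, rfl | hxη | hxτ⟩
                  · exact Or.inl ⟨hxv, Or.inl rfl⟩
                  · exact Or.inl ⟨hxv, Or.inr hxη⟩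
                  · exact Or.inr hxτ
              rw [hueq]
              exact hwf
          have hdel : delFace (link Δ τ) σ' = link (delFace Δ σ) τ := by
            ext ρ
            simp only [delFace, link, Set.mem_setOf_eq]
            constructor
            · rintro ⟨⟨hd, hu⟩, hns⟩
              refine ⟨hd, hu, fun hs => hns ?_⟩
              intro x hx
              have hx1 := Finset.mem_sdiff.mp hx
              rcases Finset.mem_union.mp (hs hx1.1) with h | h
              · exact h
              · exact absurd h hx1.2
            · rintro ⟨hd, hu, hns⟩
              refine ⟨⟨hd, hu⟩, fun hs => hns ?_⟩
              intro x hx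
              by_cases hxτ : x ∈ τ
              · exact Finset.mem_union_right _ hxτ
              · exact Finset.mem_union_left _ (hs (Finset.mem_sdiff.mpr ⟨hx, hxτ⟩))
          have hlink : link (link Δ τ) σ' = link (link Δ σ) (τ \ σ) := by
            ext ρ
            simp only [link, Set.mem_setOf_eq, Finset.disjoint_union_left]
            rw [Finset.union_assoc, Finset.union_assoc,
              Finset.sdiff_union_self_eq_union, Finset.sdiff_union_self_eq_union,
              Finset.union_comm σ τ]
            constructor
            · rintro ⟨hd1, ⟨hd2, _⟩, hu⟩
              refine ⟨?_, ⟨?_, Finset.sdiff_disjoint⟩, hu⟩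
              · exact Finset.disjoint_of_subset_right Finset.sdiff_subset hd2
              · rw [Finset.disjoint_left]
                intro x hx hxσ
                by_cases hxτ : x ∈ τ
                · exact Finset.disjoint_left.mp hd2 hx hxτ
                · exact Finset.disjoint_left.mp hd1 hx (Finset.mem_sdiff.mpr ⟨hxσ, hxτ⟩)
            · rintro ⟨hd1, ⟨hd2, _⟩, hu⟩
              refine ⟨?_, ⟨?_, Finset.sdiff_disjoint⟩, hu⟩
              · exact Finset.disjoint_of_subset_right Finset.sdiff_subset hd2
              · rw [Finset.disjoint_left]
                intro x hx hxτ
                by_cases hxσ : x ∈ σ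
                · exact Finset.disjoint_left.mp hd2 hx hxσ
                · exact Finset.disjoint_left.mp hd1 hx (Finset.mem_sdiff.mpr ⟨hxτ, hxσ⟩)
          refine KDecomposable.of_shed k (link Δ τ) σ' hσ'mem hσ'ne hdim' hshed' ?_ ?_
          · rw [hdel]
            exact ih1 hCdel τ ⟨hτ, hστ⟩
          · rw [hlink]
            refine ih2 hClink (τ \ σ) ⟨Finset.sdiff_disjoint, ?_⟩
            rwa [Finset.sdiff_union_self_eq_union]
        · -- link Δ τ = link (delFace Δ σ) τ
          have heq : link Δ τ = link (delFace Δ σ) τ := by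
            ext ρ
            simp only [link, delFace, Set.mem_setOf_eq]
            constructor
            · rintro ⟨hd, hu⟩
              refine ⟨hd, hu, fun hs => hστΔ ?_⟩
              exact hC _ hu _ (Finset.union_subset Finset.subset_union_right hs)
            · rintro ⟨hd, hu, _⟩
              exact ⟨hd, hu⟩
          rw [heq]
          exact ih1 hCdel τ ⟨hτ, hστ⟩

/-- links in a `k`-decomposable complex are `k`-decomposable. -/
theorem stmt7 (Δ : Set (Finset ι)) (hΔ : IsComplex Δ) (k : ℤ)
    (h : KDecomposable k Δ) : ∀ τ ∈ Δ, KDecomposable k (link Δ τ) :=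
  stmt7_aux k Δ h hΔ
end

section
/- For simplicial complexes Δ₁ and Δ₂ on disjoint vertex sets, the join Δ₁ * Δ₂ is k-decomposable if and only if both Δ₁ and Δ₂ are k-decomposable. -/
variable {ι : Type*} [DecidableEq ι]

/-! The link of a `k`-decomposable complex at any face is again `k`-decomposable: if `σ` is
the shedding face and `ρ` any face, then either `σ ∪ ρ` is not a face and the link is a link
of `Δ \ σ`, or `σ ⊆ ρ` and it is a link of `link Δ σ`, or `σ \ ρ` is a shedding face of
`link Δ ρ` whose deletion and link are links of `Δ \ σ` and `link Δ σ`. Since the link of a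
join at a facet of one factor is the other factor, `k`-decomposability passes from a join to
its factors. Conversely a shedding face of a factor is a shedding face of the join, with
deletion and link the joins of the deletion and link with the other factor, so induction on
both factors (ending at the join of two simplices, a simplex) gives the other direction. -/

open Finset

namespace IsComplex

variable {Δ : Set (Finset ι)}

theorem empty_mem (hΔ : IsComplex Δ) (hne : Δ.Nonempty) : (∅ : Finset ι) ∈ Δ :=
  let ⟨σ, hσ⟩ := hne
  hΔ σ hσ ∅ (empty_subset σ)

protected theorem delFace (hΔ : IsComplex Δ) (σ : Finset ι) : IsComplex (delFace Δ σ) :=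
  fun _ ⟨hτ, hστ⟩ _ hρτ => ⟨hΔ _ hτ _ hρτ, fun hσρ => hστ (hσρ.trans hρτ)⟩

protected theorem link (hΔ : IsComplex Δ) (σ : Finset ι) : IsComplex (link Δ σ) :=
  fun _ ⟨hd, hu⟩ _ hρτ => ⟨hd.mono_left hρτ, hΔ _ hu _ (union_subset_union hρτ subset_rfl)⟩

end IsComplex

theorem exists_isFacet {Δ : Set (Finset ι)} {V : Finset ι} (hV : ∀ σ ∈ Δ, σ ⊆ V)
    (hne : Δ.Nonempty) : ∃ σ, IsFacet Δ σ := by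
  have hfin : Δ.Finite := V.powerset.finite_toSet.subset fun σ hσ => by simpa using hV σ hσ
  obtain ⟨σ, hσ, hmax⟩ := hfin.exists_maximal hne
  exact ⟨σ, hσ, fun τ hτ hστ => subset_antisymm hστ (hmax hτ hστ)⟩

theorem link_of_isFacet {Δ : Set (Finset ι)} {σ : Finset ι} (hσ : IsFacet Δ σ) :
    link Δ σ = {∅} := by
  ext τ
  refine ⟨fun ⟨hd, hu⟩ => ?_, fun hτ => ?_⟩
  · have hτσ : τ ⊆ σ := by
      rw [hσ.2 _ hu subset_union_right]
      exact subset_union_left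
    exact Set.mem_singleton_iff.2 (hd.eq_bot_of_le hτσ)
  · rw [Set.mem_singleton_iff.1 hτ]
    exact ⟨disjoint_empty_left σ, by simpa using hσ.1⟩

theorem link_simplex {s ρ : Finset ι} (hρ : ρ ⊆ s) :
    link {τ | τ ⊆ s} ρ = {τ | τ ⊆ s \ ρ} := by
  ext τ
  simp only [link, Set.mem_ofPred_eq, subset_sdiff, union_subset_iff, hρ, and_true]
  exact and_comm

theorem link_link (Δ : Set (Finset ι)) (ρ σ : Finset ι) :
    link (link Δ ρ) (σ \ ρ) = link Δ (σ ∪ ρ) := by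
  ext τ
  simp only [link, Set.mem_ofPred_eq, union_assoc, sdiff_union_self_eq_union,
    disjoint_union_left, disjoint_union_right]
  have hτ : Disjoint τ (σ \ ρ) ∧ Disjoint τ ρ ↔ Disjoint τ σ ∧ Disjoint τ ρ := by
    rw [← disjoint_union_right, ← disjoint_union_right, sdiff_union_self_eq_union]
  have : Disjoint (σ \ ρ) ρ := sdiff_disjoint
  tauto

theorem delFace_link (Δ : Set (Finset ι)) (ρ σ : Finset ι) :
    delFace (link Δ ρ) (σ \ ρ) = link (delFace Δ σ) ρ := by
  ext τ
  simp only [link, delFace, Set.mem_ofPred_eq, sdiff_le_iff']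
  tauto

theorem link_eq_link_delFace {Δ : Set (Finset ι)} (hΔ : IsComplex Δ) {ρ σ : Finset ι}
    (hσρ : σ ∪ ρ ∉ Δ) : link Δ ρ = link (delFace Δ σ) ρ := by
  ext τ
  refine ⟨fun ⟨hd, hu⟩ => ⟨hd, hu, fun hστ => hσρ ?_⟩, fun ⟨hd, hu, _⟩ => ⟨hd, hu⟩⟩
  exact hΔ _ hu _ (union_subset hστ subset_union_right)

protected theorem SheddingFace.link {Δ : Set (Finset ι)} {σ : Finset ι} (hσ : SheddingFace Δ σ)
    (ρ : Finset ι) : SheddingFace (link Δ ρ) (σ \ ρ) := by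
  rintro τ ⟨hτρ, hτ⟩ hστ v hv
  obtain ⟨hvσ, hvρ⟩ := mem_sdiff.1 hv
  obtain ⟨w, hw, hwτ⟩ := hσ (τ ∪ ρ) hτ (by simpa [union_comm] using hστ) v hvσ
  rw [mem_union, not_or] at hw
  refine ⟨w, hw.1, (disjoint_insert_left.2 ⟨hw.2, hτρ⟩).mono_left (erase_subset v _), ?_⟩
  rwa [← insert_union, erase_union_distrib, erase_eq_of_notMem hvρ] at hwτ

theorem kDecomposable_link {k : ℤ} {Δ : Set (Finset ι)} (h : KDecomposable k Δ)
    (hΔ : IsComplex Δ) {ρ : Finset ι} (hρ : ρ ∈ Δ) : KDecomposable k (link Δ ρ) := by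
  induction h generalizing ρ with
  | of_empty => exact absurd hρ (Set.notMem_empty ρ)
  | of_simplex s =>
    rw [link_simplex hρ]
    exact .of_simplex _ _
  | of_shed Δ σ _ _ hdim hshed _ _ ih₁ ih₂ =>
    by_cases hσρ : σ ∪ ρ ∈ Δ
    · have hρσ : ρ \ σ ∈ link Δ σ :=
        ⟨sdiff_disjoint, by rwa [sdiff_union_self_eq_union, union_comm]⟩
      by_cases hsub : σ ⊆ ρ
      · rw [← union_eq_left.2 hsub, ← link_link]
        exact ih₂ (hΔ.link σ) hρσ
      · refine .of_shed k _ (σ \ ρ) ⟨sdiff_disjoint, by rwa [sdiff_union_self_eq_union]⟩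
          (sdiff_nonempty.2 hsub) (le_trans (mod_cast card_le_card sdiff_subset) hdim)
          (hshed.link ρ) ?_ ?_
        · rw [delFace_link]
          exact ih₁ (hΔ.delFace σ) ⟨hρ, hsub⟩
        · rw [link_link, union_comm, ← link_link]
          exact ih₂ (hΔ.link σ) hρσ
    · have hsub : ¬σ ⊆ ρ := fun h => hσρ (by rwa [union_eq_right.2 h])
      rw [link_eq_link_delFace hΔ hσρ]
      exact ih₁ (hΔ.delFace σ) ⟨hρ, hsub⟩

section Join

variable {V₁ V₂ : Finset ι} {Δ₁ Δ₂ : Set (Finset ι)}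

theorem joinC_comm (Δ₁ Δ₂ : Set (Finset ι)) : joinC Δ₁ Δ₂ = joinC Δ₂ Δ₁ := by
  ext τ
  constructor <;> rintro ⟨a, ha, b, hb, rfl⟩ <;> exact ⟨b, hb, a, ha, union_comm a b⟩

@[simp] theorem joinC_empty_left (Δ : Set (Finset ι)) : joinC ∅ Δ = ∅ := by
  ext τ
  simp [joinC]

@[simp] theorem joinC_singleton_empty_left (Δ : Set (Finset ι)) : joinC {∅} Δ = Δ := by
  ext τ
  simp [joinC]

theorem joinC_simplex (s t : Finset ι) :
    joinC {τ | τ ⊆ s} {τ | τ ⊆ t} = {τ | τ ⊆ s ∪ t} := by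
  ext τ
  refine ⟨fun ⟨a, ha, b, hb, he⟩ => he ▸ union_subset_union ha hb, fun hτ => ?_⟩
  refine ⟨τ ∩ s, inter_subset_right, τ \ s, ?_, by rw [union_comm, sdiff_union_inter]⟩
  rwa [Set.mem_ofPred_eq, sdiff_le_iff]

protected theorem IsComplex.joinC (h₁ : IsComplex Δ₁) (h₂ : IsComplex Δ₂) :
    IsComplex (joinC Δ₁ Δ₂) := by
  rintro _ ⟨a, ha, b, hb, rfl⟩ τ hτ
  refine ⟨τ ∩ a, h₁ a ha _ inter_subset_right, τ ∩ b, h₂ b hb _ inter_subset_right, ?_⟩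
  rw [← inter_union_distrib_left, inter_eq_left.2 hτ]

theorem delFace_joinC {σ : Finset ι} (hσ : σ ⊆ V₁) (hV₂ : ∀ τ ∈ Δ₂, τ ⊆ V₂)
    (hd : Disjoint V₁ V₂) : delFace (joinC Δ₁ Δ₂) σ = joinC (delFace Δ₁ σ) Δ₂ := by
  ext τ
  constructor
  · rintro ⟨⟨a, ha, b, hb, rfl⟩, hστ⟩
    exact ⟨a, ⟨ha, fun hσa => hστ (hσa.trans subset_union_left)⟩, b, hb, rfl⟩
  · rintro ⟨a, ⟨ha, hσa⟩, b, hb, rfl⟩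
    exact ⟨⟨a, ha, b, hb, rfl⟩,
      fun hστ => hσa ((hd.mono hσ (hV₂ b hb)).left_le_of_le_sup_right hστ)⟩

theorem link_joinC {σ : Finset ι} (hσ : σ ⊆ V₁) (hV₂ : ∀ τ ∈ Δ₂, τ ⊆ V₂)
    (hd : Disjoint V₁ V₂) :
    link (joinC Δ₁ Δ₂) σ = joinC (link Δ₁ σ) Δ₂ := by
  ext τ
  constructor
  · rintro ⟨hτσ, a, ha, b, hb, he⟩
    have hbσ : Disjoint b σ := (hd.mono hσ (hV₂ b hb)).symm
    have hσa : σ ⊆ a := hbσ.symm.left_le_of_le_sup_right (he ▸ subset_union_right :)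
    refine ⟨a \ σ, ⟨sdiff_disjoint, by rwa [sdiff_union_of_subset hσa]⟩, b, hb, ?_⟩
    calc τ = (τ ∪ σ) \ σ := (union_sdiff_cancel_right hτσ).symm
      _ = a \ σ ∪ b := by rw [he, union_sdiff_distrib, sdiff_eq_self_of_disjoint hbσ]
  · rintro ⟨c, ⟨hcσ, hc⟩, b, hb, rfl⟩
    have hbσ : Disjoint b σ := (hd.mono hσ (hV₂ b hb)).symm
    exact ⟨disjoint_union_left.2 ⟨hcσ, hbσ⟩, c ∪ σ, hc, b, hb, union_right_comm c b σ⟩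

protected theorem SheddingFace.joinC {σ : Finset ι} (hshed : SheddingFace Δ₁ σ)
    (hσ : σ ⊆ V₁) (hV₁ : ∀ τ ∈ Δ₁, τ ⊆ V₁) (hV₂ : ∀ τ ∈ Δ₂, τ ⊆ V₂) (hd : Disjoint V₁ V₂) :
    SheddingFace (joinC Δ₁ Δ₂) σ := by
  rintro _ ⟨a, ha, b, hb, rfl⟩ hσab v hv
  have hσb : Disjoint σ b := hd.mono hσ (hV₂ b hb)
  have hσa : σ ⊆ a := hσb.left_le_of_le_sup_right hσab
  obtain ⟨w, hwa, hw⟩ := hshed a ha hσa v hv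
  have hwV : w ∈ V₁ :=
    hV₁ _ hw (mem_erase.2 ⟨fun hwv => hwa (hwv ▸ hσa hv), mem_insert_self w a⟩)
  have hwb : w ∉ b := fun hwb => disjoint_left.1 hd hwV (hV₂ b hb hwb)
  refine ⟨w, by simp [hwa, hwb], _, hw, b, hb, ?_⟩
  rw [← insert_union, erase_union_distrib, erase_eq_of_notMem (disjoint_left.1 hσb hv)]

theorem link_joinC_of_isFacet {σ : Finset ι} (hσ : IsFacet Δ₁ σ) (hV₁ : ∀ τ ∈ Δ₁, τ ⊆ V₁)
    (hV₂ : ∀ τ ∈ Δ₂, τ ⊆ V₂) (hd : Disjoint V₁ V₂) : link (joinC Δ₁ Δ₂) σ = Δ₂ := by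
  rw [link_joinC (hV₁ σ hσ.1) hV₂ hd, link_of_isFacet hσ, joinC_singleton_empty_left]

theorem kDecomposable_of_joinC {k : ℤ} {σ : Finset ι} (hσ : IsFacet Δ₁ σ)
    (hV₁ : ∀ τ ∈ Δ₁, τ ⊆ V₁) (hV₂ : ∀ τ ∈ Δ₂, τ ⊆ V₂) (hd : Disjoint V₁ V₂)
    (h₁ : IsComplex Δ₁) (h₂ : IsComplex Δ₂) (hE₂ : (∅ : Finset ι) ∈ Δ₂)
    (h : KDecomposable k (joinC Δ₁ Δ₂)) : KDecomposable k Δ₂ := by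
  rw [← link_joinC_of_isFacet hσ hV₁ hV₂ hd]
  exact kDecomposable_link h (h₁.joinC h₂) ⟨σ, hσ.1, ∅, hE₂, (union_empty σ).symm⟩

theorem kDecomposable_joinC_of_simplex_left {k : ℤ} (hd : Disjoint V₁ V₂)
    (hV₂ : ∀ τ ∈ Δ₂, τ ⊆ V₂) (hE₂ : (∅ : Finset ι) ∈ Δ₂)
    (hsimplex : ∀ s ⊆ V₁, KDecomposable k (joinC {τ | τ ⊆ s} Δ₂))
    (h₁ : KDecomposable k Δ₁) (hV₁ : ∀ τ ∈ Δ₁, τ ⊆ V₁) : KDecomposable k (joinC Δ₁ Δ₂) := by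
  induction h₁ with
  | of_empty =>
    rw [joinC_empty_left]
    exact .of_empty k
  | of_simplex s => exact hsimplex s (hV₁ s (subset_refl s))
  | of_shed Δ σ hσ hne hdim hshed _ _ ih₁ ih₂ =>
    have hσV := hV₁ σ hσ
    refine .of_shed k _ σ ⟨σ, hσ, ∅, hE₂, (union_empty σ).symm⟩ hne hdim
      (hshed.joinC hσV hV₁ hV₂ hd) ?_ ?_
    · rw [delFace_joinC hσV hV₂ hd]
      exact ih₁ fun τ hτ => hV₁ τ hτ.1
    · rw [link_joinC hσV hV₂ hd]
      exact ih₂ fun τ hτ => subset_union_left.trans (hV₁ _ hτ.2)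

theorem kDecomposable_joinC {k : ℤ} (hd : Disjoint V₁ V₂)
    (h₁ : KDecomposable k Δ₁) (hV₁ : ∀ τ ∈ Δ₁, τ ⊆ V₁)
    (h₂ : KDecomposable k Δ₂) (hV₂ : ∀ τ ∈ Δ₂, τ ⊆ V₂) (hE₂ : (∅ : Finset ι) ∈ Δ₂) :
    KDecomposable k (joinC Δ₁ Δ₂) := by
  refine kDecomposable_joinC_of_simplex_left hd hV₂ hE₂ (fun s hs => ?_) h₁ hV₁
  rw [joinC_comm]
  refine kDecomposable_joinC_of_simplex_left hd.symm (fun τ hτ => hτ.trans hs) (empty_subset s)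
    (fun t _ => ?_) h₂ hV₂
  rw [joinC_simplex]
  exact .of_simplex k _

end Join

/-- a join is `k`-decomposable iff both factors are. -/
theorem stmt8 (V₁ V₂ : Finset ι) (Δ₁ Δ₂ : Set (Finset ι))
    (h₁ : IsComplex Δ₁) (h₂ : IsComplex Δ₂)
    (hV₁ : ∀ σ ∈ Δ₁, σ ⊆ V₁) (hV₂ : ∀ σ ∈ Δ₂, σ ⊆ V₂)
    (hdisj : Disjoint V₁ V₂) (hne₁ : Δ₁.Nonempty) (hne₂ : Δ₂.Nonempty) (k : ℤ) :
    KDecomposable k (joinC Δ₁ Δ₂) ↔ KDecomposable k Δ₁ ∧ KDecomposable k Δ₂ := by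
  obtain ⟨σ₁, hσ₁⟩ := exists_isFacet hV₁ hne₁
  obtain ⟨σ₂, hσ₂⟩ := exists_isFacet hV₂ hne₂
  have hE₁ := h₁.empty_mem hne₁
  have hE₂ := h₂.empty_mem hne₂
  refine ⟨fun h => ⟨?_, kDecomposable_of_joinC hσ₁ hV₁ hV₂ hdisj h₁ h₂ hE₂ h⟩,
    fun ⟨hk₁, hk₂⟩ => kDecomposable_joinC hdisj hk₁ hV₁ hk₂ hV₂ hE₂⟩
  rw [joinC_comm] at h
  exact kDecomposable_of_joinC hσ₂ hV₂ hV₁ hdisj.symm h₂ h₁ hE₁ h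
end

section
/- If Δ is a vertex decomposable simplicial complex, then the s-skeleton of Δ is vertex decomposable for every s. -/
variable {ι : Type*} [DecidableEq ι]

/-- Faces with at most `n` vertices: the `(n - 1)`-dimensional skeleton. -/
def skeleton (Δ : Set (Finset ι)) (n : ℕ) : Set (Finset ι) :=
  {σ | σ ∈ Δ ∧ σ.card ≤ n}

def simplex (σ : Finset ι) : Set (Finset ι) :=
  {τ | τ ⊆ σ}

section Skeleton

variable {Δ : Set (Finset ι)} {σ : Finset ι} {n : ℕ}

omit [DecidableEq ι] in
lemma delFace_skeleton : delFace (skeleton Δ n) σ = skeleton (delFace Δ σ) n := by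
  ext τ
  simp only [delFace, skeleton, Set.mem_ofPred_eq]
  tauto

lemma link_skeleton (hσ : σ.card ≤ n) :
    link (skeleton Δ n) σ = skeleton (link Δ σ) (n - σ.card) := by
  ext τ
  simp only [link, skeleton, Set.mem_ofPred_eq]
  constructor
  · rintro ⟨hdisj, hface, hcard⟩
    rw [Finset.card_union_of_disjoint hdisj] at hcard
    exact ⟨⟨hdisj, hface⟩, by omega⟩
  · rintro ⟨⟨hdisj, hface⟩, hcard⟩
    refine ⟨hdisj, hface, ?_⟩
    rw [Finset.card_union_of_disjoint hdisj]
    omega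

omit [DecidableEq ι] in
lemma skeleton_eq_skeleton_delFace (hσ : n < σ.card) :
    skeleton Δ n = skeleton (delFace Δ σ) n := by
  ext τ
  simp only [delFace, skeleton, Set.mem_ofPred_eq]
  refine ⟨fun ⟨hτ, hcard⟩ => ⟨⟨hτ, fun hστ => ?_⟩, hcard⟩, fun ⟨⟨hτ, _⟩, hcard⟩ => ⟨hτ, hcard⟩⟩
  have := Finset.card_le_card hστ
  omega

/-- The exchange `τ ↦ (τ ∪ {w}) \ {v}` preserves cardinality, so it stays inside every skeleton. -/
lemma SheddingFace.skeleton (hshed : SheddingFace Δ σ) : SheddingFace (skeleton Δ n) σ := by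
  rintro τ ⟨hτ, hcard⟩ hστ v hv
  obtain ⟨w, hwτ, hw⟩ := hshed τ hτ hστ v hv
  refine ⟨w, hwτ, hw, ?_⟩
  rw [Finset.card_erase_of_mem (Finset.mem_insert_of_mem (hστ hv)),
    Finset.card_insert_of_notMem hwτ]
  omega

end Skeleton

section Simplex

variable {σ : Finset ι} {v : ι} {n : ℕ}

omit [DecidableEq ι] in
lemma skeleton_simplex_of_card_le (hσ : σ.card ≤ n) : skeleton (simplex σ) n = simplex σ := by
  ext τ
  exact ⟨fun h => h.1, fun hτ => ⟨hτ, (Finset.card_le_card hτ).trans hσ⟩⟩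

omit [DecidableEq ι] in
lemma skeleton_simplex_zero : skeleton (simplex σ) 0 = simplex ∅ := by
  ext τ
  simp only [skeleton, simplex, Set.mem_ofPred_eq, Nat.le_zero, Finset.card_eq_zero,
    Finset.subset_empty]
  exact ⟨fun h => h.2, fun h => ⟨h ▸ Finset.empty_subset σ, h⟩⟩

lemma delFace_simplex_singleton : delFace (simplex σ) {v} = simplex (σ.erase v) := by
  ext τ
  simp only [delFace, simplex, Set.mem_ofPred_eq, Finset.singleton_subset_iff,
    Finset.subset_erase]

lemma link_simplex_singleton (hv : v ∈ σ) : link (simplex σ) {v} = simplex (σ.erase v) := by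
  ext τ
  simp only [link, simplex, Set.mem_ofPred_eq, Finset.disjoint_singleton_right,
    Finset.union_subset_iff, Finset.singleton_subset_iff, Finset.subset_erase]
  tauto

lemma sheddingFace_skeleton_simplex (hn : n < σ.card) :
    SheddingFace (skeleton (simplex σ) n) {v} := by
  rintro τ ⟨hτσ, hcard⟩ hvτ u hu
  obtain ⟨w, hwσ, hwτ⟩ := Finset.exists_of_ssubset
    (hτσ.ssubset_of_ne (by rintro rfl; omega))
  refine ⟨w, hwτ, (Finset.erase_subset _ _).trans (Finset.insert_subset hwσ hτσ), ?_⟩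
  rw [Finset.card_erase_of_mem (Finset.mem_insert_of_mem (hvτ hu)),
    Finset.card_insert_of_notMem hwτ]
  omega

end Simplex

namespace KDecomposable

variable {k : ℤ}

lemma skeleton_simplex (hk : 0 ≤ k) (σ : Finset ι) (n : ℕ) :
    KDecomposable k (skeleton (simplex σ) n) := by
  induction σ using Finset.strongInduction generalizing n with
  | _ σ ih =>
  rcases le_or_gt σ.card n with hσn | hnσ
  · rw [skeleton_simplex_of_card_le hσn]
    exact of_simplex k σ
  obtain rfl | hn := Nat.eq_zero_or_pos n
  · rw [skeleton_simplex_zero]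
    exact of_simplex k ∅
  obtain ⟨v, hv⟩ : σ.Nonempty := Finset.card_pos.mp (by omega)
  have hvn : ({v} : Finset ι).card ≤ n := (Finset.card_singleton v).symm ▸ hn
  refine of_shed k _ {v} ⟨Finset.singleton_subset_iff.mpr hv, hvn⟩ (Finset.singleton_nonempty v)
    (by simpa using hk) (sheddingFace_skeleton_simplex hnσ) ?_ ?_
  · rw [delFace_skeleton, delFace_simplex_singleton]
    exact ih _ (Finset.erase_ssubset hv) n
  · rw [link_skeleton hvn, link_simplex_singleton hv]
    exact ih _ (Finset.erase_ssubset hv) _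

/-- When the skeleton is too small to contain the shedding face `σ`, it is already a skeleton of
the deletion `Δ \ σ`; otherwise `σ` sheds the skeleton, with deletion and link again skeleta. -/
lemma skeleton (hk : 0 ≤ k) {Δ : Set (Finset ι)} (h : KDecomposable k Δ) (n : ℕ) :
    KDecomposable k (skeleton Δ n) := by
  induction h generalizing n with
  | of_empty =>
    rw [_root_.skeleton, Set.sep_empty]
    exact of_empty k
  | of_simplex σ => exact skeleton_simplex hk σ n
  | of_shed Δ σ hσ hne hdim hshed _ _ ih_del ih_link =>
    rcases lt_or_ge n σ.card with hnσ | hσn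
    · rw [skeleton_eq_skeleton_delFace hnσ]
      exact ih_del n
    · refine of_shed k _ σ ⟨hσ, hσn⟩ hne hdim hshed.skeleton ?_ ?_
      · rw [delFace_skeleton]
        exact ih_del n
      · rw [link_skeleton hσn]
        exact ih_link _

end KDecomposable

theorem stmt9_general (Δ : Set (Finset ι))
    (h : KDecomposable 0 Δ) (s : ℕ) :
    KDecomposable 0 {σ | σ ∈ Δ ∧ σ.card ≤ s + 1} :=
  h.skeleton le_rfl (s + 1)

/-- skeleta of vertex decomposable complexes are vertex decomposable. -/
theorem stmt9 (Δ : Set (Finset ι)) (hΔ : IsComplex Δ)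
    (h : KDecomposable 0 Δ) (s : ℕ) :
    KDecomposable 0 {σ | σ ∈ Δ ∧ σ.card ≤ s + 1} :=
  stmt9_general Δ h s
end

section
/- If (v, e) is a neighborhood containment pair of a clutter C, then σ = e\{v} is a shedding face of the independence complex I(C). -/
variable {ι : Type*} [DecidableEq ι]

/-- if `(v, e)` is a neighborhood containment pair of `C`, then
`σ = e \ {v}` is a shedding face of `I(C)`. -/
theorem stmt12 (V : Finset ι) (C : Set (Finset ι)) (hC : IsClutter C)
    (hCV : ∀ e ∈ C, e ⊆ V) (v : ι) (e : Finset ι) (he : e ∈ C) (hve : v ∈ e)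
    (hnc : ∀ e₂ ∈ C, e₂ ≠ e → v ∈ e₂ → ∃ e₃ ∈ C, e₃ ⊆ (e ∪ e₂).erase v) :
    SheddingFace (indepOn V C) (e.erase v) := by
  intro τ hτ hsub x hx
  obtain ⟨hτV, hτind⟩ := hτ
  have hvτ : v ∉ τ := by
    intro hvτ
    exact hτind e he (fun y hy => by
      by_cases hyv : y = v
      · exact hyv ▸ hvτ
      · exact hsub (Finset.mem_erase.mpr ⟨hyv, hy⟩))
  refine ⟨v, hvτ, ?_, ?_⟩
  · intro y hy
    rcases Finset.mem_insert.mp (Finset.mem_of_mem_erase hy) with h | h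
    · exact h ▸ hCV e he hve
    · exact hτV h
  · intro e₂ he₂ hsub₂
    have hxe₂ : x ∉ e₂ := fun h => (Finset.mem_erase.mp (hsub₂ h)).1 rfl
    by_cases hv₂ : v ∈ e₂
    · have hne : e₂ ≠ e := fun h => hxe₂ (h ▸ (Finset.mem_erase.mp hx).2)
      obtain ⟨e₃, he₃, hsub₃⟩ := hnc e₂ he₂ hne hv₂
      refine hτind e₃ he₃ (fun y hy => ?_)
      have := Finset.mem_erase.mp (hsub₃ hy)
      rcases Finset.mem_union.mp this.2 with h | h
      · exact hsub (Finset.mem_erase.mpr ⟨this.1, h⟩)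
      · have := Finset.mem_erase.mp (hsub₂ h)
        rcases Finset.mem_insert.mp this.2 with h' | h'
        · exact absurd h' (Finset.mem_erase.mp (hsub₃ hy)).1
        · exact h'
    · refine hτind e₂ he₂ (fun y hy => ?_)
      have := Finset.mem_erase.mp (hsub₂ hy)
      rcases Finset.mem_insert.mp this.2 with h' | h'
      · exact absurd (h' ▸ hy) hv₂
      · exact h'
end

section
/- If G is a graph such that for every independent set A of G the induced subgraph G \ N[A] either is empty or has a simplicial vertex, then the independence complex of G is vertex decomposable. -/
variable {ι : Type*} [DecidableEq ι]

/-- Closed neighborhood `N[A]` of a set of vertices in a graph. -/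
def closedNbhd [Fintype ι] (G : SimpleGraph ι) [DecidableRel G.Adj] (A : Finset ι) : Finset ι :=
  A ∪ A.biUnion (fun a => G.neighborFinset a)

/-- An independent set of a graph. -/
def GraphIndep (G : SimpleGraph ι) (A : Finset ι) : Prop :=
  ∀ a ∈ A, ∀ b ∈ A, ¬ G.Adj a b

/-- A simplicial vertex of the induced subgraph of `G` on `S`: its neighborhood
within `S` induces a complete subgraph. -/
def SimplicialInduced (G : SimpleGraph ι) (S : Finset ι) (v : ι) : Prop :=
  v ∈ S ∧ ∀ a ∈ S, ∀ b ∈ S, G.Adj v a → G.Adj v b → a ≠ b → G.Adj a b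

section AuxVD

/-- Cone over a complex with apex `v`. -/
def coneC (v : ι) (Δ : Set (Finset ι)) : Set (Finset ι) := {τ | τ.erase v ∈ Δ}

lemma cone_kdec (k : ℤ) (v : ι) (Δ : Set (Finset ι)) (h : KDecomposable k Δ) :
    (∀ τ ∈ Δ, v ∉ τ) → KDecomposable k (coneC v Δ) := by
  induction h with
  | of_empty =>
      intro _
      have : coneC v (∅ : Set (Finset ι)) = ∅ := by
        ext τ; simp [coneC]
      rw [this]; exact KDecomposable.of_empty _
  | of_simplex σ =>
      intro _
      have : coneC v {τ : Finset ι | τ ⊆ σ} = {τ : Finset ι | τ ⊆ insert v σ} := by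
        ext τ; simp [coneC, Finset.subset_insert_iff]
      rw [this]; exact KDecomposable.of_simplex _ _
  | of_shed Δ σ hσ hne hdim hshed h1 h2 ih1 ih2 =>
      intro hv
      have hvσ : v ∉ σ := hv σ hσ
      have hσc : σ ∈ coneC v Δ := by
        simpa [coneC, Finset.erase_eq_of_notMem hvσ] using hσ
      have hdel : delFace (coneC v Δ) σ = coneC v (delFace Δ σ) := by
        ext τ
        simp only [delFace, coneC, Set.mem_setOf_eq, Finset.subset_erase]
        tauto
      have hlink : link (coneC v Δ) σ = coneC v (link Δ σ) := by
        ext τ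
        simp only [link, coneC, Set.mem_setOf_eq]
        have herase : (τ ∪ σ).erase v = τ.erase v ∪ σ := by
          rw [Finset.erase_union_distrib, Finset.erase_eq_of_notMem hvσ]
        constructor
        · rintro ⟨hd, hu⟩
          exact ⟨hd.mono_left (Finset.erase_subset _ _), by rwa [herase] at hu⟩
        · rintro ⟨hd, hu⟩
          refine ⟨Finset.disjoint_left.2 fun a haτ haσ => ?_, by rwa [herase]⟩
          have : a ≠ v := fun e => hvσ (e ▸ haσ)
          exact Finset.disjoint_left.1 hd (Finset.mem_erase.2 ⟨this, haτ⟩) haσ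
      have hshedc : SheddingFace (coneC v Δ) σ := by
        intro τ hτ hsub v₀ hv₀
        have hv₀v : v₀ ≠ v := fun e => hvσ (e ▸ hv₀)
        obtain ⟨w, hw, hwf⟩ :=
          hshed (τ.erase v) hτ (Finset.subset_erase.2 ⟨hsub, hvσ⟩) v₀ hv₀
        have hwv : w ≠ v := by
          intro e; subst e
          exact hv _ hwf (Finset.mem_erase.2 ⟨fun e => hv₀v e.symm, Finset.mem_insert_self w _⟩)
        refine ⟨w, fun hwτ => hw (Finset.mem_erase.2 ⟨hwv, hwτ⟩), ?_⟩
        show ((insert w τ).erase v₀).erase v ∈ Δ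
        have : ((insert w τ).erase v₀).erase v = (insert w (τ.erase v)).erase v₀ := by
          ext y
          simp only [Finset.mem_erase, Finset.mem_insert]
          constructor
          · rintro ⟨hyv, hyv₀, hy⟩
            rcases hy with hy | hy
            · exact ⟨hyv₀, Or.inl hy⟩
            · exact ⟨hyv₀, Or.inr ⟨hyv, hy⟩⟩
          · rintro ⟨hyv₀, hy⟩
            rcases hy with hy | ⟨hyv, hy⟩
            · exact ⟨hy ▸ hwv, hyv₀, Or.inl hy⟩
            · exact ⟨hyv, hyv₀, Or.inr hy⟩
        rwa [this]
      refine KDecomposable.of_shed _ _ σ hσc hne hdim hshedc ?_ ?_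
      · rw [hdel]; exact ih1 fun τ hτ => hv τ hτ.1
      · rw [hlink]
        exact ih2 fun τ hτ => fun hvτ => hv _ hτ.2 (Finset.mem_union_left _ hvτ)

variable [Fintype ι] (G : SimpleGraph ι) [DecidableRel G.Adj]

/-- The independence complex of the induced subgraph on `S`. -/
def DS (S : Finset ι) : Set (Finset ι) := {σ : Finset ι | σ ⊆ S ∧ GraphIndep G σ}

/-- The simplicial-vertex hypothesis, relativized to the induced subgraph on `S`. -/
def HS (S : Finset ι) : Prop :=
  ∀ A : Finset ι, A ⊆ S → GraphIndep G A →
    (S \ closedNbhd G A = ∅ ∨ ∃ v, SimplicialInduced G (S \ closedNbhd G A) v)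

lemma mem_closedNbhd {A : Finset ι} {x : ι} :
    x ∈ closedNbhd G A ↔ x ∈ A ∨ ∃ a ∈ A, G.Adj a x := by
  simp [closedNbhd]

lemma mem_closedNbhd_singleton {w x : ι} :
    x ∈ closedNbhd G {w} ↔ x = w ∨ G.Adj w x := by
  simp [mem_closedNbhd]

lemma closedNbhd_empty : closedNbhd G (∅ : Finset ι) = ∅ := by
  ext x; simp [mem_closedNbhd]

lemma closedNbhd_insert (w : ι) (A : Finset ι) :
    closedNbhd G (insert w A) = closedNbhd G {w} ∪ closedNbhd G A := by
  ext x
  simp only [Finset.mem_union, mem_closedNbhd, Finset.mem_insert, Finset.mem_singleton]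
  constructor
  · rintro (h | h)
    · rcases h with h | h
      · exact Or.inl (Or.inl h)
      · exact Or.inr (Or.inl h)
    · rcases h with ⟨a, ha, hadj⟩
      rcases ha with ha | ha
      · exact Or.inl (Or.inr ⟨a, ha, hadj⟩)
      · exact Or.inr (Or.inr ⟨a, ha, hadj⟩)
  · rintro (h | h)
    · rcases h with h | ⟨a, ha, hadj⟩
      · exact Or.inl (Or.inl h)
      · exact Or.inr ⟨a, Or.inl ha, hadj⟩
    · rcases h with h | ⟨a, ha, hadj⟩
      · exact Or.inl (Or.inr h)
      · exact Or.inr ⟨a, Or.inr ha, hadj⟩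

lemma HS_contract {S : Finset ι} (hS : HS G S) {w : ι} (hw : w ∈ S) :
    HS G (S \ closedNbhd G {w}) := by
  intro A hA hAi
  have hmem : ∀ a ∈ A, a ∈ S ∧ ¬(a = w ∨ G.Adj w a) := by
    intro a ha
    have := hA ha
    rw [Finset.mem_sdiff, mem_closedNbhd_singleton] at this
    exact this
  have hwA : GraphIndep G (insert w A) := by
    intro a ha b hb
    rcases Finset.mem_insert.1 ha with ha' | ha' <;> rcases Finset.mem_insert.1 hb with hb' | hb'
    · rw [ha', hb']; exact G.irrefl
    · rw [ha']; exact fun hadj => (hmem b hb').2 (Or.inr hadj)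
    · rw [hb']; exact fun hadj => (hmem a ha').2 (Or.inr hadj.symm)
    · exact hAi a ha' b hb'
  have h2 : insert w A ⊆ S :=
    Finset.insert_subset hw (hA.trans Finset.sdiff_subset)
  have hres := hS (insert w A) h2 hwA
  have heq : S \ closedNbhd G (insert w A) = (S \ closedNbhd G {w}) \ closedNbhd G A := by
    rw [closedNbhd_insert]
    ext x
    simp only [Finset.mem_sdiff, Finset.mem_union]
    tauto
  rwa [heq] at hres

lemma card_sdiff_closed_lt {S : Finset ι} {w : ι} (hw : w ∈ S) :
    (S \ closedNbhd G {w}).card < S.card := by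
  apply Finset.card_lt_card
  rw [Finset.ssubset_iff_of_subset Finset.sdiff_subset]
  refine ⟨w, hw, ?_⟩
  simp [mem_closedNbhd_singleton]

lemma DS_empty : DS G (∅ : Finset ι) = {τ : Finset ι | τ ⊆ ∅} := by
  ext τ
  simp only [DS, Set.mem_setOf_eq]
  constructor
  · exact fun h => h.1
  · intro h
    exact ⟨h, fun a ha => absurd (h ha) (Finset.notMem_empty a)⟩

lemma main_aux (n : ℕ) : ∀ S : Finset ι, S.card ≤ n → HS G S → KDecomposable 0 (DS G S) := by
  induction n with
  | zero =>
      intro S hc _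
      have hS0 : S = ∅ := Finset.card_eq_zero.1 (Nat.le_zero.1 hc)
      subst hS0
      rw [DS_empty]
      exact KDecomposable.of_simplex 0 ∅
  | succ n ih =>
      intro S hc hS
      have hind0 : GraphIndep G (∅ : Finset ι) := fun a ha => absurd ha (Finset.notMem_empty a)
      rcases hS ∅ (Finset.empty_subset S) hind0 with h0 | ⟨v, hv⟩
      · rw [closedNbhd_empty, Finset.sdiff_empty] at h0
        subst h0
        rw [DS_empty]
        exact KDecomposable.of_simplex 0 ∅
      · rw [closedNbhd_empty, Finset.sdiff_empty] at hv
        obtain ⟨hvS, hsimp⟩ := hv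
        set W : Finset ι := G.neighborFinset v ∩ S with hWdef
        have hvW : v ∉ W := fun h => G.irrefl ((G.mem_neighborFinset v v).1 (Finset.mem_inter.1 h).1)
        -- The cone case: all neighbours of v inside S have been deleted.
        have coneCase : ∀ D : Finset ι, D ⊆ W → W ⊆ D → KDecomposable 0 (DS G (S \ D)) := by
          intro D h1 h2
          have hDW : D = W := Finset.Subset.antisymm h1 h2
          subst hDW
          have heq : DS G (S \ W) = coneC v (DS G (S \ closedNbhd G {v})) := by
            ext τ
            simp only [DS, coneC, Set.mem_setOf_eq]
            constructor
            · rintro ⟨hsub, hind⟩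
              refine ⟨fun x hx => ?_, fun a ha b hb =>
                hind a (Finset.mem_of_mem_erase ha) b (Finset.mem_of_mem_erase hb)⟩
              have hxv : x ≠ v := Finset.ne_of_mem_erase hx
              have hx' := hsub (Finset.mem_of_mem_erase hx)
              rw [Finset.mem_sdiff] at hx' ⊢
              refine ⟨hx'.1, ?_⟩
              rw [mem_closedNbhd_singleton]
              rintro (e | hadj)
              · exact hxv e
              · exact hx'.2 (Finset.mem_inter.2 ⟨(G.mem_neighborFinset v x).2 hadj, hx'.1⟩)
            · rintro ⟨hsub, hind⟩
              have hmem : ∀ x ∈ τ.erase v, x ∈ S ∧ ¬(x = v ∨ G.Adj v x) := by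
                intro x hx
                have := hsub hx
                rw [Finset.mem_sdiff, mem_closedNbhd_singleton] at this
                exact this
              constructor
              · intro x hx
                rcases eq_or_ne x v with e | hxv
                · rw [e]; exact Finset.mem_sdiff.2 ⟨hvS, hvW⟩
                · have := hmem x (Finset.mem_erase.2 ⟨hxv, hx⟩)
                  exact Finset.mem_sdiff.2 ⟨this.1, fun hxW => this.2 (Or.inr
                    ((G.mem_neighborFinset v x).1 (Finset.mem_inter.1 hxW).1))⟩
              · intro a ha b hb
                rcases eq_or_ne a v with ea | hav <;> rcases eq_or_ne b v with eb | hbv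
                · rw [ea, eb]; exact G.irrefl
                · rw [ea]; exact fun hadj => (hmem b (Finset.mem_erase.2 ⟨hbv, hb⟩)).2 (Or.inr hadj)
                · rw [eb]; exact fun hadj => (hmem a (Finset.mem_erase.2 ⟨hav, ha⟩)).2 (Or.inr hadj.symm)
                · exact hind a (Finset.mem_erase.2 ⟨hav, ha⟩) b (Finset.mem_erase.2 ⟨hbv, hb⟩)
          rw [heq]
          have hcard' : (S \ closedNbhd G {v}).card ≤ n := by
            have := card_sdiff_closed_lt G (S := S) (w := v) hvS
            omega
          refine cone_kdec 0 v _ (ih _ hcard' (HS_contract G hS hvS)) ?_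
          intro τ hτ hvτ
          have := hτ.1 hvτ
          rw [Finset.mem_sdiff, mem_closedNbhd_singleton] at this
          exact this.2 (Or.inl rfl)
        -- inner induction, shedding neighbours of v one at a time
        have inner : ∀ m (D : Finset ι), D ⊆ W → (W \ D).card ≤ m →
            KDecomposable 0 (DS G (S \ D)) := by
          intro m
          induction m with
          | zero =>
              intro D hD hcard
              refine coneCase D hD fun x hx => ?_
              by_contra hxD
              have : x ∈ W \ D := Finset.mem_sdiff.2 ⟨hx, hxD⟩
              have := Finset.card_pos.2 ⟨x, this⟩
              omega
          | succ m ihm =>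
              intro D hD hcard
              rcases eq_or_ne (W \ D) ∅ with hWD | hWD
              · refine coneCase D hD fun x hx => ?_
                by_contra hxD
                have : x ∈ W \ D := Finset.mem_sdiff.2 ⟨hx, hxD⟩
                rw [hWD] at this
                exact absurd this (Finset.notMem_empty x)
              · obtain ⟨w, hwWD⟩ := Finset.nonempty_iff_ne_empty.2 hWD
                have hwW : w ∈ W := (Finset.mem_sdiff.1 hwWD).1
                have hwD : w ∉ D := (Finset.mem_sdiff.1 hwWD).2
                have hadjvw : G.Adj v w := (G.mem_neighborFinset v w).1 (Finset.mem_inter.1 hwW).1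
                have hwS : w ∈ S := (Finset.mem_inter.1 hwW).2
                have hvD : v ∉ D := fun h => hvW (hD h)
                -- D ⊆ closed neighbourhood of w
                have hDNw : ∀ x ∈ W, x ∈ closedNbhd G {w} := by
                  intro x hxW
                  rw [mem_closedNbhd_singleton]
                  rcases eq_or_ne x w with e | hne
                  · exact Or.inl e
                  · have hadjvx : G.Adj v x := (G.mem_neighborFinset v x).1 (Finset.mem_inter.1 hxW).1
                    exact Or.inr (hsimp x (Finset.mem_inter.1 hxW).2 w hwS hadjvx hadjvw hne).symm
                refine KDecomposable.of_shed 0 _ {w} ?_ (Finset.singleton_nonempty w) (by simp) ?_ ?_ ?_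
                · exact ⟨Finset.singleton_subset_iff.2 (Finset.mem_sdiff.2 ⟨hwS, hwD⟩),
                    fun a ha b hb => by
                      rw [Finset.mem_singleton] at ha hb; subst ha; subst hb; exact G.irrefl⟩
                · -- shedding face
                  intro τ hτ hsub v₀ hv₀
                  rw [Finset.mem_singleton] at hv₀
                  rw [hv₀]
                  have hwτ : w ∈ τ := hsub (Finset.mem_singleton_self w)
                  have hvτ : v ∉ τ := fun hvτ => hτ.2 v hvτ w hwτ hadjvw
                  refine ⟨v, hvτ, ?_, ?_⟩
                  · intro x hx
                    have hxw : x ≠ w := Finset.ne_of_mem_erase hx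
                    rcases Finset.mem_insert.1 (Finset.mem_of_mem_erase hx) with e | hxτ
                    · rw [e]; exact Finset.mem_sdiff.2 ⟨hvS, hvD⟩
                    · exact hτ.1 hxτ
                  · intro a ha b hb
                    have haw : a ≠ w := Finset.ne_of_mem_erase ha
                    have hbw : b ≠ w := Finset.ne_of_mem_erase hb
                    have key : ∀ c ∈ τ, c ≠ w → ¬G.Adj v c := by
                      intro c hcτ hcw hadj
                      have hcS : c ∈ S := (Finset.mem_sdiff.1 (hτ.1 hcτ)).1
                      exact hτ.2 c hcτ w hwτ (hsimp c hcS w hwS hadj hadjvw hcw)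
                    rcases Finset.mem_insert.1 (Finset.mem_of_mem_erase ha) with ea | haτ <;>
                      rcases Finset.mem_insert.1 (Finset.mem_of_mem_erase hb) with eb | hbτ
                    · rw [ea, eb]; exact G.irrefl
                    · rw [ea]; exact key b hbτ hbw
                    · rw [eb]; exact fun hadj => key a haτ haw hadj.symm
                    · exact hτ.2 a haτ b hbτ
                · -- deletion
                  have hdel : delFace (DS G (S \ D)) {w} = DS G (S \ insert w D) := by
                    ext τ
                    simp only [delFace, DS, Set.mem_setOf_eq, Finset.singleton_subset_iff]
                    constructor
                    · rintro ⟨⟨h1, h2⟩, h3⟩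
                      refine ⟨fun x hx => ?_, h2⟩
                      have := h1 hx
                      rw [Finset.mem_sdiff] at this ⊢
                      refine ⟨this.1, fun hm => ?_⟩
                      rcases Finset.mem_insert.1 hm with e | hm
                      · exact h3 (e ▸ hx)
                      · exact this.2 hm
                    · rintro ⟨h1, h2⟩
                      refine ⟨⟨fun x hx => ?_, h2⟩, fun hw' => ?_⟩
                      · have := h1 hx
                        rw [Finset.mem_sdiff] at this ⊢
                        exact ⟨this.1, fun hd => this.2 (Finset.mem_insert_of_mem hd)⟩
                      · exact (Finset.mem_sdiff.1 (h1 hw')).2 (Finset.mem_insert_self w D)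
                  rw [hdel]
                  refine ihm (insert w D) (Finset.insert_subset hwW hD) ?_
                  have : W \ insert w D = (W \ D).erase w := by
                    rw [Finset.sdiff_insert]
                  rw [this, Finset.card_erase_of_mem hwWD]
                  omega
                · -- link
                  have hlink : link (DS G (S \ D)) {w} = DS G (S \ closedNbhd G {w}) := by
                    ext τ
                    simp only [link, DS, Set.mem_setOf_eq]
                    constructor
                    · rintro ⟨hdisj, hsub, hind⟩
                      have hwτ : w ∉ τ := Finset.disjoint_singleton_right.1 hdisj
                      refine ⟨fun x hx => ?_, fun a ha b hb =>
                        hind a (Finset.mem_union_left _ ha) b (Finset.mem_union_left _ hb)⟩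
                      have hxS := hsub (Finset.mem_union_left _ hx)
                      rw [Finset.mem_sdiff] at hxS ⊢
                      refine ⟨hxS.1, ?_⟩
                      rw [mem_closedNbhd_singleton]
                      rintro (e | hadj)
                      · exact hwτ (e ▸ hx)
                      · exact hind x (Finset.mem_union_left _ hx) w
                          (Finset.mem_union_right _ (Finset.mem_singleton_self w)) hadj.symm
                    · rintro ⟨hsub, hind⟩
                      have hmem : ∀ x ∈ τ, x ∈ S ∧ ¬(x = w ∨ G.Adj w x) := by
                        intro x hx
                        have := hsub hx
                        rw [Finset.mem_sdiff, mem_closedNbhd_singleton] at this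
                        exact this
                      have hwτ : w ∉ τ := fun hw' => (hmem w hw').2 (Or.inl rfl)
                      refine ⟨Finset.disjoint_singleton_right.2 hwτ, fun x hx => ?_, ?_⟩
                      · rcases Finset.mem_union.1 hx with hx | hx
                        · have := hmem x hx
                          refine Finset.mem_sdiff.2 ⟨this.1, fun hxD => ?_⟩
                          exact this.2 ((mem_closedNbhd_singleton G).1 (hDNw x (hD hxD)))
                        · rw [Finset.mem_singleton] at hx
                          rw [hx]
                          exact Finset.mem_sdiff.2 ⟨hwS, hwD⟩
                      · intro a ha b hb
                        rcases Finset.mem_union.1 ha with ha | ha <;>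
                          rcases Finset.mem_union.1 hb with hb | hb
                        · exact hind a ha b hb
                        · rw [Finset.mem_singleton] at hb
                          rw [hb]
                          exact fun hadj => (hmem a ha).2 (Or.inr hadj.symm)
                        · rw [Finset.mem_singleton] at ha
                          rw [ha]
                          exact fun hadj => (hmem b hb).2 (Or.inr hadj)
                        · rw [Finset.mem_singleton] at ha hb
                          rw [ha, hb]
                          exact G.irrefl
                  rw [hlink]
                  have hcard' : (S \ closedNbhd G {w}).card ≤ n := by
                    have := card_sdiff_closed_lt G (S := S) (w := w) hwS
                    omega
                  exact ih _ hcard' (HS_contract G hS hwS)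
        have := inner W.card ∅ (Finset.empty_subset _) (by rw [Finset.sdiff_empty])
        rwa [Finset.sdiff_empty] at this

end AuxVD

/-- if for every independent set `A` of `G` the induced subgraph
`G \ N[A]` is empty or has a simplicial vertex, then `I(G)` is vertex decomposable. -/
theorem stmt15 [Fintype ι] (G : SimpleGraph ι) [DecidableRel G.Adj]
    (h : ∀ A : Finset ι, GraphIndep G A →
      (Finset.univ \ closedNbhd G A = ∅ ∨
        ∃ v, SimplicialInduced G (Finset.univ \ closedNbhd G A) v)) :
    KDecomposable 0 {σ : Finset ι | GraphIndep G σ} := by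
  have hH : HS G (Finset.univ : Finset ι) := fun A _ hAi => h A hAi
  have hmain := main_aux G Finset.univ.card Finset.univ le_rfl hH
  have heq : DS G (Finset.univ : Finset ι) = {σ : Finset ι | GraphIndep G σ} := by
    ext σ
    simp [DS]
  rwa [heq] at hmain
end
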